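/- Let n ≥ 3 and let a, b ∈ A_n be doubly pure. If the associator (a, ẽ_0, b) = 0, then there exist real numbers r and s such that a·b = r·e_0 + s·ẽ_0. -/
import Mathlib


noncomputable section

open scoped Quaternion

/-- The Cayley–Dickson algebra `A n = ℝ^(2^n)` as a type. -/
def CD : ℕ → Type
  | 0 => ℝ
  | n + 1 => CD n × CD n

namespace CD

instance instAddCommGroup : (n : ℕ) → AddCommGroup (CD n)
  | 0 => inferInstanceAs (AddCommGroup ℝ)
  | n + 1 =>
    letI := instAddCommGroup n
    inferInstanceAs (AddCommGroup (CD n × CD n))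

instance instModule : (n : ℕ) → Module ℝ (CD n)
  | 0 => inferInstanceAs (Module ℝ ℝ)
  | n + 1 =>
    letI := instModule n
    inferInstanceAs (Module ℝ (CD n × CD n))

/-- Conjugation in the Cayley–Dickson algebra. -/
def conj : {n : ℕ} → CD n → CD n
  | 0, x => x
  | _ + 1, x => (conj x.1, -x.2)

/-- Cayley–Dickson multiplication. -/
def mul : {n : ℕ} → CD n → CD n → CD n
  | 0, x, y => Mul.mul (α := ℝ) x y
  | _ + 1, x, y =>
    (mul x.1 y.1 - mul (conj y.2) x.2, mul y.2 x.1 + mul x.2 (conj y.1))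

instance instMul (n : ℕ) : Mul (CD n) := ⟨mul⟩

/-- The multiplicative unit `e₀`. -/
def one : {n : ℕ} → CD n
  | 0 => (1 : ℝ)
  | _ + 1 => (one, 0)

instance instOne (n : ℕ) : One (CD n) := ⟨one⟩

/-- The Euclidean inner product on `A n = ℝ^(2^n)`. -/
def inner : {n : ℕ} → CD n → CD n → ℝ
  | 0, x, y => (x * y : ℝ)
  | _ + 1, x, y => inner x.1 y.1 + inner x.2 y.2

/-- The Euclidean norm on `A n = ℝ^(2^n)`. -/
def norm {n : ℕ} (x : CD n) : ℝ := Real.sqrt (inner x x)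

/-- `ã = (-a₂, a₁)`. -/
def tilde {n : ℕ} (a : CD (n + 1)) : CD (n + 1) := (-a.2, a.1)

/-- `ẽ₀ = (0, e₀)`. -/
def etilde (n : ℕ) : CD (n + 1) := ((0 : CD n), (1 : CD n))

/-- An element is pure if its conjugate is its negative. -/
def IsPure {n : ℕ} (a : CD n) : Prop := conj a = -a

/-- An element of `A (n+1)` is doubly pure if both of its coordinates are pure. -/
def IsDoublyPure {n : ℕ} (a : CD (n + 1)) : Prop := IsPure a.1 ∧ IsPure a.2

/-- The associator `(a,b,c) = (ab)c - a(bc)`. -/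
def assoc {n : ℕ} (a b c : CD n) : CD n := a * b * c - a * (b * c)

/-- An element is alternative if `(a,a,x) = 0` for all `x`. -/
def IsAlternative {n : ℕ} (a : CD n) : Prop := ∀ x : CD n, assoc a a x = 0

/-- An element is strongly alternative if `(a,a,x) = 0` and `(a,x,x) = 0` for all `x`. -/
def IsStronglyAlternative {n : ℕ} (a : CD n) : Prop :=
  (∀ x : CD n, assoc a a x = 0) ∧ (∀ x : CD n, assoc a x x = 0)

/-- The pure (imaginary) part of an element. -/
def im {n : ℕ} (a : CD n) : CD n := (2⁻¹ : ℝ) • (a - conj a)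

/-- `H a`, the span of `{e₀, ã, a, ẽ₀}`. -/
def H {n : ℕ} (a : CD (n + 1)) : Submodule ℝ (CD (n + 1)) :=
  Submodule.span ℝ {(1 : CD (n + 1)), tilde a, a, etilde n}

/-- The orthogonal complement of `H a`. -/
def Hperp {n : ℕ} (a : CD (n + 1)) : Set (CD (n + 1)) :=
  {x | ∀ y ∈ H a, inner y x = 0}

end CD

namespace CD

variable {n : ℕ}

lemma ext {x y : CD (n + 1)} (h1 : x.1 = y.1) (h2 : x.2 = y.2) : x = y := Prod.ext h1 h2

@[simp] lemma add_fst (x y : CD (n + 1)) : (x + y).1 = x.1 + y.1 := rfl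
@[simp] lemma add_snd (x y : CD (n + 1)) : (x + y).2 = x.2 + y.2 := rfl
@[simp] lemma neg_fst (x : CD (n + 1)) : (-x).1 = -x.1 := rfl
@[simp] lemma neg_snd (x : CD (n + 1)) : (-x).2 = -x.2 := rfl
@[simp] lemma sub_fst (x y : CD (n + 1)) : (x - y).1 = x.1 - y.1 := rfl
@[simp] lemma sub_snd (x y : CD (n + 1)) : (x - y).2 = x.2 - y.2 := rfl
@[simp] lemma smul_fst (r : ℝ) (x : CD (n + 1)) : (r • x).1 = r • x.1 := rfl
@[simp] lemma smul_snd (r : ℝ) (x : CD (n + 1)) : (r • x).2 = r • x.2 := rfl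
@[simp] lemma zero_fst : (0 : CD (n + 1)).1 = 0 := rfl
@[simp] lemma zero_snd : (0 : CD (n + 1)).2 = 0 := rfl
@[simp] lemma one_fst : (1 : CD (n + 1)).1 = 1 := rfl
@[simp] lemma one_snd : (1 : CD (n + 1)).2 = 0 := rfl
@[simp] lemma conj_fst (x : CD (n + 1)) : (conj x).1 = conj x.1 := rfl
@[simp] lemma conj_snd (x : CD (n + 1)) : (conj x).2 = -x.2 := rfl
@[simp] lemma mul_fst (x y : CD (n + 1)) :
    (mul x y).1 = mul x.1 y.1 - mul (conj y.2) x.2 := rfl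
@[simp] lemma mul_snd (x y : CD (n + 1)) :
    (mul x y).2 = mul y.2 x.1 + mul x.2 (conj y.1) := rfl
@[simp] lemma hmul_eq (x y : CD n) : x * y = mul x y := rfl
@[simp] lemma etilde_fst : (etilde n).1 = 0 := rfl
@[simp] lemma etilde_snd : (etilde n).2 = 1 := rfl

@[simp] lemma cconj_zero : ∀ {n : ℕ}, conj (0 : CD n) = 0 := by
  intro n
  induction n with
  | zero => rfl
  | succ m ih => exact ext (by simp [ih]) (by simp)

@[simp] lemma cconj_one : ∀ {n : ℕ}, conj (1 : CD n) = 1 := by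
  intro n
  induction n with
  | zero => rfl
  | succ m ih => exact ext (by simp [ih]) (by simp)

@[simp] lemma cconj_neg : ∀ {n : ℕ} (x : CD n), conj (-x) = -conj x := by
  intro n
  induction n with
  | zero => exact fun x => rfl
  | succ m ih => exact fun x => ext (by simp [ih]) (by simp)

@[simp] lemma cconj_add : ∀ {n : ℕ} (x y : CD n), conj (x + y) = conj x + conj y := by
  intro n
  induction n with
  | zero => exact fun x y => rfl
  | succ m ih => exact fun x y => ext (by simp [ih]) (by simp; abel)

@[simp] lemma cconj_sub (x y : CD n) : conj (x - y) = conj x - conj y := by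
  rw [sub_eq_add_neg, cconj_add, cconj_neg, ← sub_eq_add_neg]

@[simp] lemma cconj_conj : ∀ {n : ℕ} (x : CD n), conj (conj x) = x := by
  intro n
  induction n with
  | zero => exact fun x => rfl
  | succ m ih => exact fun x => ext (by simp [ih]) (by simp)

lemma zero_mul_and_mul_zero : ∀ {n : ℕ} (x : CD n), mul 0 x = 0 ∧ mul x 0 = 0 := by
  intro n
  induction n with
  | zero =>
      exact fun x => ⟨zero_mul (M₀ := ℝ) x, mul_zero (M₀ := ℝ) x⟩
  | succ m ih =>
      intro x
      constructor
      · exact ext (by simp [(ih _).1, (ih _).2]) (by simp [(ih _).1, (ih _).2])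
      · exact ext (by simp [(ih _).1, (ih _).2]) (by simp [(ih _).1, (ih _).2])

@[simp] lemma czero_mul (x : CD n) : mul 0 x = 0 := (zero_mul_and_mul_zero x).1
@[simp] lemma cmul_zero (x : CD n) : mul x 0 = 0 := (zero_mul_and_mul_zero x).2

@[simp] lemma cmul_one : ∀ {n : ℕ} (x : CD n), mul x 1 = x := by
  intro n
  induction n with
  | zero => exact fun x => mul_one (M := ℝ) x
  | succ m ih => exact fun x => ext (by simp [ih]) (by simp [ih])

@[simp] lemma cone_mul : ∀ {n : ℕ} (x : CD n), mul 1 x = x := by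
  intro n
  induction n with
  | zero => exact fun x => one_mul (M := ℝ) x
  | succ m ih => exact fun x => ext (by simp [ih]) (by simp [ih])

lemma neg_mul_and_mul_neg :
    ∀ {n : ℕ} (x y : CD n), mul (-x) y = -mul x y ∧ mul x (-y) = -mul x y := by
  intro n
  induction n with
  | zero =>
      exact fun x y => ⟨neg_mul (α := ℝ) x y, mul_neg (α := ℝ) x y⟩
  | succ m ih =>
      intro x y
      constructor
      · refine ext ?_ ?_ <;> simp [(ih _ _).1, (ih _ _).2] <;> abel
      · refine ext ?_ ?_ <;> simp [(ih _ _).1, (ih _ _).2] <;> abel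

@[simp] lemma cneg_mul (x y : CD n) : mul (-x) y = -mul x y := (neg_mul_and_mul_neg x y).1
@[simp] lemma cmul_neg (x y : CD n) : mul x (-y) = -mul x y := (neg_mul_and_mul_neg x y).2

lemma cconj_mul : ∀ {n : ℕ} (x y : CD n), conj (mul x y) = mul (conj y) (conj x) := by
  intro n
  induction n with
  | zero => exact fun x y => mul_comm (G := ℝ) x y
  | succ m ih =>
      intro x y
      refine ext ?_ ?_ <;> simp [ih] <;> abel

lemma exists_self_add_conj (z : CD n) : ∃ r : ℝ, z + conj z = r • (1 : CD n) := by
  induction n with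
  | zero => exact ⟨z + z, (mul_one (M := ℝ) (z + z)).symm⟩
  | succ m ih =>
      obtain ⟨r, hr⟩ := ih z.1
      refine ⟨r, ext ?_ ?_⟩
      · simpa using hr
      · simp

lemma exists_mul_add_mul (x y : CD n) (hx : IsPure x) (hy : IsPure y) :
    ∃ r : ℝ, mul x y + mul y x = r • (1 : CD n) := by
  have key : conj (mul x y) = mul y x := by
    rw [cconj_mul, hx, hy, cneg_mul, cmul_neg, neg_neg]
  obtain ⟨r, hr⟩ := exists_self_add_conj (mul x y)
  exact ⟨r, by rw [← key]; exact hr⟩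

lemma half_smul (x : CD n) (r : ℝ) (h : (2 : ℝ) • x = r • (1 : CD n)) :
    x = (r / 2) • (1 : CD n) := by
  have := congrArg (fun y : CD n => (2⁻¹ : ℝ) • y) h
  simp only [smul_smul] at this
  norm_num at this
  rw [this]
  congr 1
  ring

end CD

/-- For `n ≥ 3` and doubly pure `a, b`, if `(a, ẽ₀, b) = 0` then
`a·b = r·e₀ + s·ẽ₀` for some reals `r, s`. -/
theorem mul_eq_smul_one_add_smul_etilde_of_assoc_etilde_eq_zero (n : ℕ) (hn : 3 ≤ n + 1)
    (a b : CD (n + 1)) (ha : CD.IsDoublyPure a) (hb : CD.IsDoublyPure b)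
    (h : CD.assoc a (CD.etilde n) b = 0) :
    ∃ r s : ℝ, a * b = r • (1 : CD (n + 1)) + s • CD.etilde n := by
  obtain ⟨ha1, ha2⟩ := ha
  obtain ⟨hb1, hb2⟩ := hb
  rw [CD.IsPure] at ha1 ha2 hb1 hb2
  have h1 := congrArg Prod.fst h
  have h2 := congrArg Prod.snd h
  simp only [CD.assoc, CD.hmul_eq, CD.mul_fst, CD.mul_snd, CD.sub_fst, CD.sub_snd,
    CD.add_fst, CD.add_snd, CD.neg_fst, CD.neg_snd, CD.etilde_fst, CD.etilde_snd,
    CD.zero_fst, CD.zero_snd, CD.cconj_zero, CD.cconj_one, CD.czero_mul, CD.cmul_zero,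
    CD.cone_mul, CD.cmul_one, CD.cconj_neg, CD.cneg_mul, CD.cmul_neg,
    ha1, ha2, hb1, hb2, neg_neg, sub_zero, zero_add, add_zero, zero_sub,
    sub_neg_eq_add] at h1 h2
  obtain ⟨r1, hr1⟩ := CD.exists_mul_add_mul a.1 b.1 ha1 hb1
  obtain ⟨r2, hr2⟩ := CD.exists_mul_add_mul b.2 a.2 hb2 ha2
  obtain ⟨s1, hs1⟩ := CD.exists_mul_add_mul b.2 a.1 hb2 ha1
  obtain ⟨s2, hs2⟩ := CD.exists_mul_add_mul a.2 b.1 ha2 hb1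
  have E2 : CD.mul b.1 a.1 + CD.mul a.2 b.2 = CD.mul a.1 b.1 + CD.mul b.2 a.2 := by
    rw [← sub_eq_zero, ← h2]
    abel
  have E1 : CD.mul b.2 a.1 - CD.mul a.2 b.1 = CD.mul a.1 b.2 - CD.mul b.1 a.2 := by
    rw [← sub_eq_zero, ← h1]
    abel
  have key1 : (2 : ℝ) • (CD.mul a.1 b.1 + CD.mul b.2 a.2) = (r1 + r2) • (1 : CD n) := by
    rw [two_smul, add_smul, ← hr1, ← hr2]
    nth_rewrite 2 [← E2]
    abel
  have key2 : (2 : ℝ) • (CD.mul b.2 a.1 - CD.mul a.2 b.1) = (s1 - s2) • (1 : CD n) := by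
    rw [two_smul, sub_smul, ← hs1, ← hs2]
    nth_rewrite 2 [E1]
    abel
  refine ⟨(r1 + r2) / 2, (s1 - s2) / 2, CD.ext ?_ ?_⟩
  · simp only [CD.hmul_eq, CD.mul_fst, CD.add_fst, CD.smul_fst, CD.one_fst, CD.etilde_fst,
      smul_zero, add_zero, hb2, CD.cneg_mul, sub_neg_eq_add]
    exact CD.half_smul _ _ key1
  · simp only [CD.hmul_eq, CD.mul_snd, CD.add_snd, CD.smul_snd, CD.one_snd, CD.etilde_snd,
      smul_zero, zero_add, hb1, CD.cmul_neg, ← sub_eq_add_neg]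
    exact CD.half_smul _ _ key2
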